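/- Let (H,f) be a symmetric bilinear lattice and c, c' characteristic forms for f. If the discriminant quadratic functions φ_{f,c} and φ_{f,c'} on G_f = H^♯/H are equal, then c' ≡ c mod 2f̂(H), i.e. there exists h ∈ H with c'(x) = c(x) + 2f(h,x) for all x ∈ H. (Injectivity of the map Char(f)/2f̂(H) → Quad(L_f).) -/

import Mathlib

open scoped TensorProduct

noncomputable section

/-- ℚ/ℤ -/
abbrev QZ : Type := AddCircle (1 : ℚ)

section Lattice

variable {H : Type} [AddCommGroup H]

/-- canonical map H → ℚ ⊗ H -/
def iotaQ (H : Type) [AddCommGroup H] : H →ₗ[ℤ] ℚ ⊗[ℤ] H :=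
  TensorProduct.mk ℤ ℚ H 1

/-- the ℚ-bilinear extension of f to ℚ ⊗ H -/
def fQ (f : H →ₗ[ℤ] H →ₗ[ℤ] ℤ) : (ℚ ⊗[ℤ] H) →ₗ[ℚ] (ℚ ⊗[ℤ] H) →ₗ[ℚ] ℚ :=
  LinearMap.BilinForm.baseChange ℚ f

/-- the ℚ-linear extension of a linear form c : H → ℤ to ℚ ⊗ H -/
def cQ (c : H →ₗ[ℤ] ℤ) : (ℚ ⊗[ℤ] H) →ₗ[ℚ] ℚ :=
  LinearMap.liftBaseChange ℚ ((Int.castAddHom ℚ).toIntLinearMap ∘ₗ c)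

/-- the dual lattice H^♯ = {x ∈ ℚ⊗H : f_ℚ(x, H) ⊆ ℤ} -/
def dualLattice (f : H →ₗ[ℤ] H →ₗ[ℤ] ℤ) : AddSubgroup (ℚ ⊗[ℤ] H) where
  carrier := {x | ∀ h : H, ∃ n : ℤ, fQ f x (iotaQ H h) = (n : ℚ)}
  zero_mem' := fun h => ⟨0, by simp⟩
  add_mem' := by
    rintro x y hx hy h
    obtain ⟨n, hn⟩ := hx h
    obtain ⟨m, hm⟩ := hy h
    exact ⟨n + m, by push_cast [map_add, LinearMap.add_apply, hn, hm]; ring⟩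
  neg_mem' := by
    rintro x hx h
    obtain ⟨n, hn⟩ := hx h
    exact ⟨-n, by push_cast [map_neg, LinearMap.neg_apply, hn]; ring⟩

/-- the image of H, as a subgroup of the dual lattice -/
def latInDual (f : H →ₗ[ℤ] H →ₗ[ℤ] ℤ) : AddSubgroup (dualLattice f) :=
  ((iotaQ H).toAddMonoidHom.range).addSubgroupOf (dualLattice f)

/-- the discriminant group G_f = H^♯/H -/
def Gf (f : H →ₗ[ℤ] H →ₗ[ℤ] ℤ) : Type :=
  dualLattice f ⧸ latInDual f

instance (f : H →ₗ[ℤ] H →ₗ[ℤ] ℤ) : AddCommGroup (Gf f) :=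
  QuotientAddGroup.Quotient.addCommGroup _

/-- the discriminant quadratic function, on representatives:
φ_{f,c}(x) = (1/2)(f_ℚ(x,x) − c_ℚ(x)) mod 1 -/
def phiRep (f : H →ₗ[ℤ] H →ₗ[ℤ] ℤ) (c : H →ₗ[ℤ] ℤ) (x : dualLattice f) : QZ :=
  ((((1 : ℚ)/2) * (fQ f x x - cQ c x) : ℚ) : QZ)

/-- the (preimage in H^♯ of the) radical of L_f -/
def radSub (f : H →ₗ[ℤ] H →ₗ[ℤ] ℤ) : AddSubgroup (dualLattice f) where
  carrier := {x | ∀ y : dualLattice f, ∃ n : ℤ, fQ f x y = (n : ℚ)}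
  zero_mem' := fun y => ⟨0, by simp⟩
  add_mem' := by
    rintro x x' hx hx' y
    obtain ⟨n, hn⟩ := hx y
    obtain ⟨m, hm⟩ := hx' y
    exact ⟨n + m, by push_cast [AddSubgroup.coe_add, map_add, LinearMap.add_apply, hn, hm]; ring⟩
  neg_mem' := by
    rintro x hx y
    obtain ⟨n, hn⟩ := hx y
    exact ⟨-n, by push_cast [AddSubgroup.coe_neg, map_neg, LinearMap.neg_apply, hn]; ring⟩

end Lattice

/-! Two characteristic forms differ by `2 d` for an integral form `d`, and
`φ_{f,c + 2d} = φ_{f,c} - d_ℚ`, so `d_ℚ` is integral on `H^♯`. For symmetric `f`, `H^♯` is exactly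
the set of `x ∈ ℚ ⊗ H` on which every form in `N = f̂(H) ⊆ H^*` is integral. In Smith normal form
bases of `N ⊆ H^*`, testing `d` against `t ⊗ e_i` (`t ∈ ℚ`, `i` outside the support of `N`) and
against `a_j⁻¹ ⊗ e_j` (`a_j` an elementary divisor) shows that the coordinates of `d` vanish off
the support and are divisible by the `a_j`, i.e. `d ∈ N`. -/

namespace Module.Basis.SmithNormalForm

variable {R M ι : Type*} [CommRing R] [AddCommGroup M] [Module R M] [Fintype ι]
  {N : Submodule R M} {n : ℕ}

lemma mem_of_repr_eq_zero_of_dvd (snf : Basis.SmithNormalForm N ι n) {m : M}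
    (hzero : ∀ i ∉ Set.range snf.f, snf.bM.repr m i = 0)
    (hdvd : ∀ j, snf.a j ∣ snf.bM.repr m (snf.f j)) : m ∈ N := by
  classical
  choose k hk using hdvd
  convert (∑ j, k j • snf.bN j).2
  have hsupp : ∀ i ∈ Finset.univ, i ∉ Finset.univ.map snf.f → snf.bM.repr m i • snf.bM i = 0 :=
    fun i _ hi => by simp [hzero i (by simpa using hi)]
  rw [← snf.bM.sum_repr m, Submodule.coe_sum,
    ← Finset.sum_subset (Finset.subset_univ _) hsupp, Finset.sum_map]
  refine Finset.sum_congr rfl fun j _ => ?_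
  rw [Submodule.coe_smul, snf.snf, hk, smul_smul, mul_comm]

end Module.Basis.SmithNormalForm

lemma Module.apply_evalEquiv_symm_coord {R M ι : Type*} [CommRing R] [AddCommGroup M]
    [Module R M] [Module.IsReflexive R M] (b : Module.Basis ι R (Module.Dual R M))
    (φ : Module.Dual R M) (i : ι) :
    φ ((Module.evalEquiv R M).symm (b.coord i)) = b.repr φ i := by
  rw [Module.apply_evalEquiv_symm_apply, Module.Basis.coord_apply]

theorem LinearMap.exists_eq_smul_of_forall_dvd {M : Type*} [AddCommGroup M] (g : M →ₗ[ℤ] ℤ)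
    (n : ℤ) (h : ∀ x, n ∣ g x) : ∃ d : M →ₗ[ℤ] ℤ, g = n • d :=
  ⟨{ toFun x := g x / n
     map_add' x y := by rw [map_add, Int.add_ediv_of_dvd_left (h x)]
     map_smul' a x := by simp [Int.mul_ediv_assoc _ (h x)] },
   LinearMap.ext fun x => (Int.mul_ediv_cancel' (h x)).symm⟩

lemma Int.eq_zero_of_forall_rat_mul_eq_intCast {m : ℤ} (h : ∀ t : ℚ, ∃ n : ℤ, t * m = n) :
    m = 0 := by
  by_contra hm
  obtain ⟨n, hn⟩ := h (1 / (2 * m))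
  have : (2 * n : ℚ) = 1 := by rw [← hn]; field_simp
  have : 2 * n = 1 := by exact_mod_cast this
  omega

lemma Int.dvd_of_rat_inv_mul_eq_intCast {a m : ℤ} (ha : a ≠ 0)
    (h : ∃ n : ℤ, (a : ℚ)⁻¹ * m = n) : a ∣ m := by
  obtain ⟨n, hn⟩ := h
  rw [inv_mul_eq_iff_eq_mul₀ (by exact_mod_cast ha)] at hn
  exact ⟨n, by exact_mod_cast hn⟩

section RationalExtension

variable {H : Type} [AddCommGroup H]

@[simp] lemma iotaQ_apply (h : H) : iotaQ H h = (1 : ℚ) ⊗ₜ[ℤ] h := rfl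

@[simp] lemma cQ_tmul (c : H →ₗ[ℤ] ℤ) (s : ℚ) (h : H) : cQ c (s ⊗ₜ[ℤ] h) = s * c h := by
  simp [cQ, smul_eq_mul]

@[simp] lemma cQ_add (c d : H →ₗ[ℤ] ℤ) : cQ (c + d) = cQ c + cQ d := by
  ext; simp

@[simp] lemma cQ_smul (n : ℤ) (c : H →ₗ[ℤ] ℤ) : cQ (n • c) = n • cQ c := by
  ext; simp

@[simp] lemma fQ_tmul (f : H →ₗ[ℤ] H →ₗ[ℤ] ℤ) (s t : ℚ) (x y : H) :
    fQ f (s ⊗ₜ[ℤ] x) (t ⊗ₜ[ℤ] y) = f x y * (s * t) := by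
  rw [fQ, LinearMap.BilinForm.baseChange_tmul, zsmul_eq_mul]

lemma fQ_apply_iotaQ (f : H →ₗ[ℤ] H →ₗ[ℤ] ℤ) (x : ℚ ⊗[ℤ] H) (h : H) :
    fQ f x (iotaQ H h) = cQ (f.flip h) x := by
  induction x using TensorProduct.induction_on with
  | zero => simp
  | tmul s y => simp [mul_comm]
  | add x y hx hy => simp only [map_add, LinearMap.add_apply, hx, hy]

lemma phiRep_add_two_smul (f : H →ₗ[ℤ] H →ₗ[ℤ] ℤ) (c d : H →ₗ[ℤ] ℤ) (x : dualLattice f) :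
    phiRep f (c + (2 : ℤ) • d) x = phiRep f c x - ((cQ d x : ℚ) : QZ) := by
  simp only [phiRep, cQ_add, cQ_smul, LinearMap.add_apply, LinearMap.smul_apply, zsmul_eq_mul,
    ← AddCircle.coe_sub]
  congr 1
  push_cast
  ring

theorem mem_of_forall_cQ_eq_intCast [Module.Free ℤ H] [Module.Finite ℤ H]
    {N : Submodule ℤ (Module.Dual ℤ H)} {d : Module.Dual ℤ H}
    (hd : ∀ x, (∀ φ ∈ N, ∃ n : ℤ, cQ φ x = n) → ∃ n : ℤ, cQ d x = n) : d ∈ N := by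
  obtain ⟨n, snf⟩ := N.smithNormalForm (Module.Free.chooseBasis ℤ (Module.Dual ℤ H))
  let e i := (Module.evalEquiv ℤ H).symm (snf.bM.coord i)
  have cQ_tmul_e (φ : Module.Dual ℤ H) (t : ℚ) i : cQ φ (t ⊗ₜ e i) = t * snf.bM.repr φ i := by
    rw [cQ_tmul, Module.apply_evalEquiv_symm_coord]
  refine snf.mem_of_repr_eq_zero_of_dvd (fun i hi => ?_) (fun j => ?_)
  · refine Int.eq_zero_of_forall_rat_mul_eq_intCast fun t => ?_
    rw [← cQ_tmul_e]
    refine hd _ fun φ hφ => ⟨0, ?_⟩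
    rw [cQ_tmul_e, snf.repr_eq_zero_of_notMem_range ⟨φ, hφ⟩ hi]
    simp
  · have ha : snf.a j ≠ 0 := fun h => snf.bN.ne_zero j (by ext; simp [snf.snf, h])
    refine Int.dvd_of_rat_inv_mul_eq_intCast ha ?_
    rw [← cQ_tmul_e]
    refine hd _ fun φ hφ => ⟨snf.bN.repr ⟨φ, hφ⟩ j, ?_⟩
    rw [cQ_tmul_e, snf.repr_apply_embedding_eq_repr_smul ⟨φ, hφ⟩, map_smul, Finsupp.smul_apply,
      smul_eq_mul, Int.cast_mul, inv_mul_cancel_left₀ (by exact_mod_cast ha)]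

end RationalExtension

theorem stmt11 {H : Type} [AddCommGroup H] [Module.Free ℤ H] [Module.Finite ℤ H]
    (f : H →ₗ[ℤ] H →ₗ[ℤ] ℤ) (hf : ∀ x y, f x y = f y x)
    (c c' : H →ₗ[ℤ] ℤ) (hc : ∀ h : H, (2 : ℤ) ∣ f h h - c h)
    (hc' : ∀ h : H, (2 : ℤ) ∣ f h h - c' h)
    (hphi : ∀ x : dualLattice f, phiRep f c x = phiRep f c' x) :
    ∃ h0 : H, ∀ x : H, c' x = c x + 2 * f h0 x := by
  obtain ⟨d, hd⟩ := (c' - c).exists_eq_smul_of_forall_dvd 2 fun h => by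
    simpa using dvd_sub (hc h) (hc' h)
  obtain rfl : c' = c + (2 : ℤ) • d := eq_add_of_sub_eq' hd
  have hd_int (x) (hx : x ∈ dualLattice f) : ∃ n : ℤ, cQ d x = n := by
    have := hphi ⟨x, hx⟩
    rw [phiRep_add_two_smul, eq_comm, sub_eq_self, AddCircle.coe_eq_zero_iff] at this
    obtain ⟨n, hn⟩ := this
    exact ⟨n, by simpa using hn.symm⟩
  have hflip : f.flip = f := LinearMap.ext₂ fun x y => hf y x
  obtain ⟨h0, rfl⟩ : d ∈ LinearMap.range f := mem_of_forall_cQ_eq_intCast fun x hx =>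
    hd_int x fun h => by rw [fQ_apply_iotaQ, hflip]; exact hx _ ⟨h, rfl⟩
  exact ⟨h0, fun x => by simp⟩
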